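/- Let D be a monotone nondecreasing deadline function and let ℒ be any countable language collection containing a measure-zero chain {L^∞} ∪ {L^j : j ≥ 1}. For every randomized generator 𝒜 satisfying sup_{K∈ℒ} sup_{E∈ℰ(K)} H_𝒜^{ℒ,K,E}(t) = o(D^{−1}(t)/t) as t → ∞, there exists a total enumeration X^∞ ∈ ℰ(L^∞) such that, almost surely over the generator's internal randomness, liminf_{i→∞} μ^pfx_i(𝒜(X^∞),L^∞,D) = 0; since μ^el_i ≤ μ^pfx_i, also liminf_{i→∞} μ^el_i(𝒜(X^∞),L^∞,D) = 0 almost surely. -/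

import Mathlib

/-! The adversary interleaves the elements of `L^∞` so slowly that, up to the deadline `D(iᵣ)`
of a checkpoint `iᵣ`, the input enumerates only `k_1, …, k_{r+1}`, which all lie in one level
`L^{φ(r)}` of the chain. Up to that time the generator cannot distinguish the input from an
enumeration of `L^{φ(r)}`, so by the hallucination bound it outputs, in expectation, at most
`εᵣ · D⁻¹(D(iᵣ)) ≤ εᵣ · iᵣ` strings outside `L^{φ(r)}`. Choosing `iᵣ` where `L^{φ(r)}` has density
below `1/(r+1)` in `L^∞_{iᵣ}` and `εᵣ = 2^{-r}/(r+1)`, Markov's inequality and Borel–Cantelli give,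
almost surely for all large `r`, `μ^pfx_{iᵣ} ≤ 2/(r+1)`. Bounded deadlines are trivial: the
generator has output at most `sup D` strings by every deadline. -/

open MeasureTheory Filter
open scoped Classical

noncomputable section

/-- The output `o_t` (for `t ≥ 1`) of a generator with next-output function `g`
on the input sequence `X` (indexed from 1): `o_t = g [x_1, …, x_t]`. -/
def outSeq (g : List ℕ → ℕ) (X : ℕ → ℕ) (t : ℕ) : ℕ :=
  g ((List.range t).map fun s => X (s + 1))

/-- The output prefix set `𝒜(X)_t = {o_1, …, o_t}`. -/
def outUpTo (g : List ℕ → ℕ) (X : ℕ → ℕ) (t : ℕ) : Finset ℕ :=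
  (Finset.Icc 1 t).image (outSeq g X)

/-- The observed strings `{x_1, …, x_t}`. -/
def obsUpTo (X : ℕ → ℕ) (t : ℕ) : Finset ℕ :=
  (Finset.Icc 1 t).image X

/-- Validity constraint on a generator: each output is a fresh string, i.e.
`o_t ∉ {x_1,…,x_t} ∪ {o_1,…,o_{t−1}}`. -/
def ValidGen (g : List ℕ → ℕ) : Prop :=
  ∀ (X : ℕ → ℕ) (t : ℕ), 1 ≤ t →
    (∀ s, 1 ≤ s → s ≤ t → outSeq g X t ≠ X s) ∧
    (∀ s, 1 ≤ s → s < t → outSeq g X t ≠ outSeq g X s)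

/-- A randomized generator: a probability space `(Ω, P)` of seeds together with a
measurable family of deterministic (valid) generators. -/
structure RandGen where
  Ω : Type
  mΩ : MeasurableSpace Ω
  P : @Measure Ω mΩ
  prob : @IsProbabilityMeasure Ω mΩ P
  gen : Ω → List ℕ → ℕ
  valid : ∀ ω, ValidGen (gen ω)
  meas : ∀ l : List ℕ, @Measurable Ω ℕ mΩ inferInstance (fun ω => gen ω l)

/-- `k_j`: the `j`-th smallest element of `K` (for `j ≥ 1`). -/
def nthElem (K : Set ℕ) (j : ℕ) : ℕ := Nat.nth (· ∈ K) (j - 1)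

/-- `K_i = {k_1, …, k_i}`: the `i` smallest elements of `K`. -/
def prefixSet (K : Set ℕ) (i : ℕ) : Finset ℕ := (Finset.Icc 1 i).image (nthElem K)

/-- Timely element-wise density `μ^el_i(𝒜(X), K, D)`. -/
def muEl (g : List ℕ → ℕ) (X : ℕ → ℕ) (K : Set ℕ) (D : ℕ → ℕ) (i : ℕ) : ℝ :=
  (∑ j ∈ Finset.Icc 1 i, if nthElem K j ∈ outUpTo g X (D j) then (1 : ℝ) else 0) / i

/-- Prefix-wise density `μ^pfx_i(𝒜(X), K, D) = |𝒜(X)_{D(i)} ∩ K_i| / i`. -/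
def muPfx (g : List ℕ → ℕ) (X : ℕ → ℕ) (K : Set ℕ) (D : ℕ → ℕ) (i : ℕ) : ℝ :=
  ((outUpTo g X (D i) ∩ prefixSet K i).card : ℝ) / i

/-- The number of hallucinations `|𝒜(X)_t \ K|` of a deterministic generator. -/
def hallucCount (g : List ℕ → ℕ) (X : ℕ → ℕ) (K : Set ℕ) (t : ℕ) : ℕ :=
  ((outUpTo g X t).filter fun n => n ∉ K).card

/-- The hallucination rate `H_𝒜^{ℒ,K,X}(t) = 𝔼[|𝒜(X)_t \ K| / t]`,
the expectation being over the internal randomness (the seed). -/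
def hallucRate (A : RandGen) (X : ℕ → ℕ) (K : Set ℕ) (t : ℕ) : ℝ :=
  ∫ ω, (hallucCount (A.gen ω) X K t : ℝ) / t ∂A.P

/-- `E ∈ ℰ(K)`: a total enumeration (with possible repetitions) of `K`. -/
def IsEnumOf (E : ℕ → ℕ) (K : Set ℕ) : Prop :=
  (∀ t, 1 ≤ t → E t ∈ K) ∧ ∀ k ∈ K, ∃ t, 1 ≤ t ∧ E t = k

/-- A countable collection of languages (infinite sets of strings). -/
def IsLangCollection (L : Set (Set ℕ)) : Prop :=
  L.Countable ∧ ∀ K ∈ L, K.Infinite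

/-- Generalized inverse `D⁻¹(t) = min {n ≥ 1 : D(n) ≥ t}`. -/
def Dinv (D : ℕ → ℕ) (t : ℕ) : ℕ := sInf {n | 1 ≤ n ∧ t ≤ D n}

/-- A feasible profile `(D, H)`: `D` is a monotone nondecreasing, discrete convex
(`D(m+1) − D(m) ≥ D(m) − D(m−1)`), superlinear deadline function, and `H` is a
nonnegative monotone nonincreasing vanishing function with `t·H(t)/D⁻¹(t) → ∞`. -/
def FeasibleProfile (D : ℕ → ℕ) (H : ℕ → ℝ) : Prop :=
  (∀ i, 1 ≤ i → 1 ≤ D i) ∧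
  (∀ m n, 1 ≤ m → m ≤ n → D m ≤ D n) ∧
  (∀ m, 2 ≤ m → D m + D m ≤ D (m + 1) + D (m - 1)) ∧
  Tendsto (fun i : ℕ => (D i : ℝ) / i) atTop atTop ∧
  (∀ t, 0 ≤ H t) ∧
  (∀ s t, 1 ≤ s → s ≤ t → H t ≤ H s) ∧
  Tendsto H atTop (nhds 0) ∧
  Tendsto (fun t : ℕ => (t : ℝ) * H t / (Dinv D t : ℝ)) atTop atTop


/-- A measure-zero chain: a nested family `L^1 ⊆ L^2 ⊆ ⋯` of languages whose union is
the language `L^∞` and such that each `L^j` has vanishing lower density inside the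
ordered prefixes of `L^∞`. -/
def MeasureZeroChain (Linf : Set ℕ) (Lj : ℕ → Set ℕ) : Prop :=
  Linf.Infinite ∧ (∀ j, 1 ≤ j → (Lj j).Infinite) ∧
  (∀ j, 1 ≤ j → Lj j ⊆ Lj (j + 1)) ∧
  (∀ j, 1 ≤ j → Lj j ⊆ Linf) ∧
  (⋃ j ∈ {j : ℕ | 1 ≤ j}, Lj j) = Linf ∧
  (∀ j, 1 ≤ j →
    liminf (fun i =>
      (((prefixSet Linf i).filter fun k => k ∈ Lj j).card : ℝ) / i) atTop = 0)

instance RandGen.instMeasurableSpace (A : RandGen) : MeasurableSpace A.Ω := A.mΩ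

instance RandGen.instIsProbabilityMeasure (A : RandGen) : IsProbabilityMeasure A.P := A.prob

section Enumerations

variable {K : Set ℕ}

lemma nthElem_mem (hK : K.Infinite) (j : ℕ) : nthElem K j ∈ K :=
  Nat.nth_mem_of_infinite hK (j - 1)

lemma nthElem_injOn (hK : K.Infinite) : Set.InjOn (nthElem K) (Set.Ici 1) := by
  intro a ha b hb hab
  have := Nat.nth_injective hK hab
  simp only [Set.mem_Ici] at ha hb
  omega

lemma exists_nthElem_eq {x : ℕ} (hx : x ∈ K) : ∃ j, 1 ≤ j ∧ nthElem K j = x :=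
  ⟨Nat.count (· ∈ K) x + 1, by omega, by simpa [nthElem] using Nat.nth_count hx⟩

lemma isEnumOf_nthElem (hK : K.Infinite) : IsEnumOf (nthElem K) K :=
  ⟨fun t _ => nthElem_mem hK t, fun _ hx => exists_nthElem_eq hx⟩

lemma nthElem_mem_prefixSet {i j : ℕ} (hj : 1 ≤ j) (hji : j ≤ i) :
    nthElem K j ∈ prefixSet K i :=
  Finset.mem_image_of_mem _ (Finset.mem_Icc.2 ⟨hj, hji⟩)

lemma coe_prefixSet_subset (hK : K.Infinite) (i : ℕ) : ↑(prefixSet K i) ⊆ K := by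
  intro x hx
  obtain ⟨j, -, rfl⟩ := Finset.mem_image.1 hx
  exact nthElem_mem hK j

lemma card_prefixSet_le (K : Set ℕ) (i : ℕ) : (prefixSet K i).card ≤ i :=
  Finset.card_image_le.trans (by simp)

lemma exists_isEnumOf_eqOn (hK : K.Infinite) {X : ℕ → ℕ} {t : ℕ}
    (hX : Set.MapsTo X (Set.Icc 1 t) K) :
    ∃ E, IsEnumOf E K ∧ Set.EqOn E X (Set.Icc 1 t) := by
  refine ⟨fun s => if s ≤ t then X s else nthElem K (s - t),
    ⟨fun s hs => ?_, fun x hx => ?_⟩, fun s hs => if_pos hs.2⟩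
  · dsimp only
    split_ifs with hst
    · exact hX ⟨hs, hst⟩
    · exact nthElem_mem hK _
  · obtain ⟨j, hj, rfl⟩ := exists_nthElem_eq hx
    exact ⟨t + j, by omega, by simp [show ¬t + j ≤ t by omega]⟩

lemma exists_isEnumOf_mapsTo_prefixSet (hK : K.Infinite) (d : ℕ → ℕ) :
    ∃ X, IsEnumOf X K ∧ ∀ r, Set.MapsTo X (Set.Iic (d r)) ↑(prefixSet K (r + 1)) := by
  -- `k_{r+1}` is placed at time `T r`, after all of `d 0, …, d r`; every other time repeats `k_1`
  set T : ℕ → ℕ := fun r => ∑ m ∈ Finset.range (r + 1), (d m + 1)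
  have hT : StrictMono T := strictMono_nat_of_lt_succ fun r => by
    simp only [T, Finset.sum_range_succ _ (r + 1)]
    omega
  have hdT : ∀ r, d r < T r := fun r => by
    simp only [T, Finset.sum_range_succ]
    omega
  refine ⟨fun s => if h : ∃ r, T r = s then nthElem K (h.choose + 1) else nthElem K 1,
    ⟨fun s _ => ?_, fun x hx => ?_⟩, fun r s hs => ?_⟩
  · dsimp only
    split_ifs <;> exact nthElem_mem hK _
  · obtain ⟨j, hj, rfl⟩ := exists_nthElem_eq hx
    have h : ∃ r, T r = T (j - 1) := ⟨_, rfl⟩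
    refine ⟨T (j - 1), (hdT _).trans_le' (Nat.zero_le _), ?_⟩
    simp only [dif_pos h, hT.injective h.choose_spec]
    congr 1
    omega
  · dsimp only
    split_ifs with h
    · have : h.choose < r := hT.lt_iff_lt.1 (by rw [h.choose_spec]; exact (hdT r).trans_le' hs)
      exact nthElem_mem_prefixSet (by omega) (by omega)
    · exact nthElem_mem_prefixSet le_rfl (by omega)

end Enumerations

section Generators

variable (g : List ℕ → ℕ) (X : ℕ → ℕ)

lemma outUpTo_mono : Monotone (outUpTo g X) :=
  fun _ _ h => Finset.image_subset_image (Finset.Icc_subset_Icc_right h)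

lemma card_outUpTo_le (t : ℕ) : (outUpTo g X t).card ≤ t :=
  Finset.card_image_le.trans (by simp)

lemma hallucCount_le (K : Set ℕ) (t : ℕ) : hallucCount g X K t ≤ t :=
  (Finset.card_filter_le _ _).trans (card_outUpTo_le g X t)

variable {g X}

lemma outSeq_congr {Y : ℕ → ℕ} {t : ℕ} (h : Set.EqOn X Y (Set.Icc 1 t)) :
    outSeq g X t = outSeq g Y t := by
  unfold outSeq
  congr 1
  refine List.map_congr_left fun s hs => h ⟨by omega, ?_⟩
  rw [List.mem_range] at hs
  omega

lemma hallucCount_congr {Y : ℕ → ℕ} {t : ℕ} (h : Set.EqOn X Y (Set.Icc 1 t)) (K : Set ℕ) :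
    hallucCount g X K t = hallucCount g Y K t := by
  unfold hallucCount outUpTo
  rw [Finset.image_congr fun s hs =>
    outSeq_congr (h.mono (Set.Icc_subset_Icc_right (Finset.mem_Icc.1 hs).2))]

end Generators

section Densities

def prefixDensity (K S : Set ℕ) (i : ℕ) : ℝ :=
  (((prefixSet K i).filter fun k => k ∈ S).card : ℝ) / i

lemma prefixDensity_le_one (K S : Set ℕ) (i : ℕ) : prefixDensity K S i ≤ 1 :=
  div_le_one_of_le₀
    (by exact_mod_cast (Finset.card_filter_le _ _).trans (card_prefixSet_le K i))
    (Nat.cast_nonneg _)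

variable (g : List ℕ → ℕ) (X : ℕ → ℕ) (K : Set ℕ) (D : ℕ → ℕ) (i : ℕ)

lemma muPfx_nonneg : 0 ≤ muPfx g X K D i := by
  unfold muPfx
  positivity

lemma muEl_nonneg : 0 ≤ muEl g X K D i := by
  unfold muEl
  positivity

lemma muPfx_le_div : muPfx g X K D i ≤ D i / i := by
  unfold muPfx
  gcongr
  exact (Finset.card_le_card Finset.inter_subset_left).trans (card_outUpTo_le g X (D i))

/-- An output counted by `μ^pfx_i` either hallucinates with respect to `S` or lies in `K_i ∩ S`. -/
lemma muPfx_le_hallucCount_add_prefixDensity (S : Set ℕ) :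
    muPfx g X K D i ≤ hallucCount g X S (D i) / i + prefixDensity K S i := by
  have hsub : outUpTo g X (D i) ∩ prefixSet K i ⊆
      (outUpTo g X (D i)).filter (· ∉ S) ∪ (prefixSet K i).filter (· ∈ S) := by
    intro x hx
    rw [Finset.mem_inter] at hx
    by_cases hxS : x ∈ S <;> simp [hx, hxS]
  rw [muPfx, prefixDensity, hallucCount, ← add_div]
  gcongr
  exact_mod_cast (Finset.card_le_card hsub).trans (Finset.card_union_le _ _)

lemma muPfx_le_two_mul {S : Set ℕ} {δ : ℝ} (hi : 0 < i)
    (hH : (hallucCount g X S (D i) : ℝ) ≤ δ * i) (hdens : prefixDensity K S i ≤ δ) :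
    muPfx g X K D i ≤ 2 * δ := by
  have hH' : (hallucCount g X S (D i) : ℝ) / i ≤ δ := by
    rwa [div_le_iff₀ (by exact_mod_cast hi)]
  linarith [muPfx_le_hallucCount_add_prefixDensity g X K D i S]

variable {K D}

lemma muEl_le_muPfx (hK : K.Infinite) (hD : ∀ m n, 1 ≤ m → m ≤ n → D m ≤ D n) :
    muEl g X K D i ≤ muPfx g X K D i := by
  unfold muEl muPfx
  gcongr
  rw [Finset.sum_boole]
  refine Nat.cast_le.2 (Finset.card_le_card_of_injOn (nthElem K) (fun j hj => ?_)
    ((nthElem_injOn hK).mono fun j hj => ?_))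
  · simp only [Finset.coe_filter, Finset.mem_Icc, Set.mem_ofPred_eq] at hj
    exact Finset.mem_inter.2 ⟨outUpTo_mono g X (hD j i hj.1.1 hj.1.2) hj.2,
      nthElem_mem_prefixSet hj.1.1 hj.1.2⟩
  · simp only [Finset.coe_filter, Finset.mem_Icc, Set.mem_ofPred_eq] at hj
    exact hj.1.1

lemma tendsto_muPfx_of_bddAbove (hD : BddAbove (Set.range D)) :
    Tendsto (fun i => muPfx g X K D i) atTop (nhds 0) := by
  obtain ⟨B, hB⟩ := hD
  refine squeeze_zero (fun i => muPfx_nonneg g X K D i) (fun i => (muPfx_le_div g X K D i).trans ?_)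
    (tendsto_const_div_atTop_nhds_zero_nat (B : ℝ))
  gcongr
  exact hB (Set.mem_range_self i)

end Densities

lemma liminf_eq_zero_of_frequently_le {ι : Type*} {l : Filter ι} {f : ι → ℝ}
    (h0 : ∀ i, 0 ≤ f i) (h : ∀ ε > 0, ∃ᶠ i in l, f i ≤ ε) : liminf f l = 0 := by
  refine le_antisymm (le_of_forall_pos_le_add fun ε hε => ?_)
    (le_liminf_of_le (IsCoboundedUnder.of_frequently_le (h 1 one_pos)) (.of_forall h0))
  simpa using liminf_le_of_frequently_le (h ε hε) (isBoundedUnder_of ⟨0, h0⟩)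

lemma tendsto_atTop_of_not_bddAbove {D : ℕ → ℕ} (hDmono : ∀ m n, 1 ≤ m → m ≤ n → D m ≤ D n)
    (hD : ¬BddAbove (Set.range D)) : Tendsto D atTop atTop := by
  refine tendsto_atTop_atTop.2 fun b => ?_
  obtain ⟨_, ⟨n, rfl⟩, hn⟩ := not_bddAbove_iff.1 hD (max b (D 0))
  have hn1 : 1 ≤ n := Nat.one_le_iff_ne_zero.2 <| by
    rintro rfl
    exact absurd hn (not_lt.2 (le_max_right _ _))
  exact ⟨n, fun m hm => (le_max_left _ _).trans (hn.le.trans (hDmono n m hn1 hm))⟩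

namespace MeasureZeroChain

variable {Linf : Set ℕ} {Lj : ℕ → Set ℕ}

lemma mono (h : MeasureZeroChain Linf Lj) {a b : ℕ} (ha : 1 ≤ a) (hab : a ≤ b) :
    Lj a ⊆ Lj b := by
  induction b, hab using Nat.le_induction with
  | base => exact subset_rfl
  | succ n hn ih => exact ih.trans (h.2.2.1 n (ha.trans hn))

lemma exists_prefixSet_subset (h : MeasureZeroChain Linf Lj) (n : ℕ) :
    ∃ j, 1 ≤ j ∧ ↑(prefixSet Linf n) ⊆ Lj j := by
  refine DirectedOn.exists_mem_subset_of_finset_subset_biUnion (c := {j | 1 ≤ j}) ⟨1, le_rfl⟩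
    (fun a ha b hb => ⟨max a b, le_max_of_le_left ha, h.mono ha (le_max_left a b),
      h.mono hb (le_max_right a b)⟩) ?_
  rw [h.2.2.2.2.1]
  exact coe_prefixSet_subset h.1 n

lemma frequently_prefixDensity_lt (h : MeasureZeroChain Linf Lj) {j : ℕ} (hj : 1 ≤ j)
    {δ : ℝ} (hδ : 0 < δ) : ∃ᶠ i in atTop, prefixDensity Linf (Lj j) i < δ := by
  refine frequently_lt_of_liminf_lt
    (isCoboundedUnder_ge_of_le atTop fun i => prefixDensity_le_one Linf (Lj j) i) ?_
  unfold prefixDensity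
  rwa [h.2.2.2.2.2 j hj]

end MeasureZeroChain

lemma measurable_hallucCount (A : RandGen) (X : ℕ → ℕ) (K : Set ℕ) (t : ℕ) :
    Measurable fun ω => hallucCount (A.gen ω) X K t := by
  -- the count depends on the seed only through the finitely many outputs `o_1, …, o_t`
  let G : (Fin (t + 1) → ℕ) → ℕ := fun o =>
    (((Finset.Icc 1 t).image fun s => if hs : s < t + 1 then o ⟨s, hs⟩ else 0).filter
      fun n => n ∉ K).card
  have hG : (fun ω => hallucCount (A.gen ω) X K t) =
      G ∘ fun ω (s : Fin (t + 1)) => outSeq (A.gen ω) X s := by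
    funext ω
    simp only [Function.comp_apply, G, hallucCount, outUpTo]
    congr 2
    refine Finset.image_congr fun s hs => ?_
    rw [Finset.coe_Icc, Set.mem_Icc] at hs
    rw [dif_pos (by omega)]
  rw [hG]
  exact (measurable_of_countable G).comp (measurable_pi_lambda _ fun s => A.meas _)

lemma integrable_hallucCount (A : RandGen) (X : ℕ → ℕ) (K : Set ℕ) (t : ℕ) :
    Integrable (fun ω => (hallucCount (A.gen ω) X K t : ℝ)) A.P :=
  .of_bound (Measurable.of_discrete.comp (measurable_hallucCount A X K t)).aestronglyMeasurable t
    (.of_forall fun ω => by simpa using hallucCount_le (A.gen ω) X K t)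

/-- Up to time `t` an input staying in `K` is indistinguishable from an enumeration of `K`. -/
lemma integral_hallucCount_le (A : RandGen) {K : Set ℕ} (hK : K.Infinite) {X : ℕ → ℕ} {t : ℕ}
    (ht : 0 < t) (hX : Set.MapsTo X (Set.Icc 1 t) K) {c : ℝ}
    (hrate : ∀ E, IsEnumOf E K → hallucRate A E K t ≤ c / t) :
    ∫ ω, (hallucCount (A.gen ω) X K t : ℝ) ∂A.P ≤ c := by
  obtain ⟨E, hE, hEX⟩ := exists_isEnumOf_eqOn hK hX
  have h := hrate E hE
  simp only [hallucRate, fun g => hallucCount_congr (g := g) hEX K, integral_div] at h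
  exact (div_le_div_iff_of_pos_right (by exact_mod_cast ht)).1 h

lemma Dinv_apply_le {D : ℕ → ℕ} {i : ℕ} (hi : 1 ≤ i) : Dinv D (D i) ≤ i :=
  Nat.sInf_le ⟨hi, le_rfl⟩

lemma eventually_integral_hallucCount_le {D : ℕ → ℕ} (hD : Tendsto D atTop atTop) (A : RandGen)
    {K : Set ℕ} (hK : K.Infinite)
    (hrate : ∀ ε > 0, ∀ᶠ t in atTop, ∀ E, IsEnumOf E K → hallucRate A E K t ≤ ε * Dinv D t / t)
    {ε : ℝ} (hε : 0 < ε) :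
    ∀ᶠ i in atTop, ∀ X, Set.MapsTo X (Set.Icc 1 (D i)) K →
      ∫ ω, (hallucCount (A.gen ω) X K (D i) : ℝ) ∂A.P ≤ ε * i := by
  filter_upwards [hD.eventually (hrate ε hε), hD.eventually_gt_atTop 0, eventually_ge_atTop 1]
    with i hrate_i hDi hi X hX
  calc ∫ ω, (hallucCount (A.gen ω) X K (D i) : ℝ) ∂A.P ≤ ε * Dinv D (D i) :=
        integral_hallucCount_le A hK hDi hX hrate_i
    _ ≤ ε * i := by
        gcongr
        exact_mod_cast Dinv_apply_le hi

lemma ae_eventually_lt_of_integral_le {Ω : Type*} [MeasurableSpace Ω] {μ : Measure Ω}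
    [IsFiniteMeasure μ] {F : ℕ → Ω → ℝ} {p c : ℕ → ℝ} (hp : Summable p) (hc : ∀ r, 0 < c r)
    (hF0 : ∀ r, 0 ≤ᵐ[μ] F r) (hF : ∀ r, Integrable (F r) μ)
    (hint : ∀ r, ∫ ω, F r ω ∂μ ≤ p r * c r) :
    ∀ᵐ ω ∂μ, ∀ᶠ r in atTop, F r ω < c r := by
  have hmarkov : ∀ r, μ.real {ω | c r ≤ F r ω} ≤ p r := fun r => by
    have := mul_meas_ge_le_integral_of_nonneg (hF0 r) (hF r) (c r)
    exact le_of_mul_le_mul_left (by linarith [hint r]) (hc r)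
  have hp0 : ∀ r, 0 ≤ p r := fun r => measureReal_nonneg.trans (hmarkov r)
  have hsum : ∑' r, μ {ω | c r ≤ F r ω} ≠ ⊤ := by
    refine ne_top_of_le_ne_top (ENNReal.ofReal_ne_top (r := ∑' r, p r)) ?_
    rw [ENNReal.ofReal_tsum_of_nonneg hp0 hp]
    refine ENNReal.tsum_le_tsum fun r => ?_
    rw [← ofReal_measureReal]
    exact ENNReal.ofReal_le_ofReal (hmarkov r)
  filter_upwards [ae_eventually_notMem hsum] with ω hω
  exact hω.mono fun r hr => not_le.1 hr

theorem exists_isEnumOf_ae_frequently_muPfx_le {D : ℕ → ℕ} (hD : Tendsto D atTop atTop)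
    {Linf : Set ℕ} {Lj : ℕ → Set ℕ} (hchain : MeasureZeroChain Linf Lj) (A : RandGen)
    (hrate : ∀ j, 1 ≤ j → ∀ ε > 0, ∀ᶠ t in atTop, ∀ E, IsEnumOf E (Lj j) →
      hallucRate A E (Lj j) t ≤ ε * Dinv D t / t) :
    ∃ X, IsEnumOf X Linf ∧
      ∀ᵐ ω ∂A.P, ∀ ε > 0, ∃ᶠ i in atTop, muPfx (A.gen ω) X Linf D i ≤ ε := by
  choose φ hφ1 hφ using fun r => hchain.exists_prefixSet_subset (r + 1)
  have hcheckpoint : ∀ r, ∃ i, (prefixDensity Linf (Lj (φ r)) i < 1 / (r + 1) ∧ r < i) ∧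
      ∀ X, Set.MapsTo X (Set.Icc 1 (D i)) (Lj (φ r)) →
        ∫ ω, (hallucCount (A.gen ω) X (Lj (φ r)) (D i) : ℝ) ∂A.P ≤ (1 / 2) ^ r / (r + 1) * i :=
    fun r => (((hchain.frequently_prefixDensity_lt (hφ1 r) (by positivity)).and_eventually
      (eventually_gt_atTop r)).and_eventually (eventually_integral_hallucCount_le hD A
        (hchain.2.1 _ (hφ1 r)) (hrate _ (hφ1 r)) (by positivity))).exists
  choose i hi hint using hcheckpoint
  obtain ⟨X, hX, hXpfx⟩ := exists_isEnumOf_mapsTo_prefixSet hchain.1 fun r => D (i r)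
  have hipos : ∀ r, 0 < i r := fun r => (hi r).2.trans_le' r.zero_le
  have hfew : ∀ᵐ ω ∂A.P, ∀ᶠ r in atTop,
      (hallucCount (A.gen ω) X (Lj (φ r)) (D (i r)) : ℝ) < 1 / (r + 1) * i r :=
    ae_eventually_lt_of_integral_le summable_geometric_two
      (fun r => mul_pos (by positivity) (by exact_mod_cast hipos r))
      (fun r => .of_forall fun ω => Nat.cast_nonneg _)
      (fun r => integrable_hallucCount A X _ _)
      (fun r => (hint r X fun s hs => hφ r (hXpfx r hs.2)).trans_eq (by ring))
  refine ⟨X, hX, hfew.mono fun ω hω ε hε => ?_⟩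
  have hsmall : ∀ᶠ r in atTop, muPfx (A.gen ω) X Linf D (i r) ≤ ε := by
    filter_upwards [hω, tendsto_one_div_add_atTop_nhds_zero_nat.eventually
      (ge_mem_nhds (half_pos hε))] with r hr hrε
    have := muPfx_le_two_mul (A.gen ω) X Linf D (i r) (hipos r) hr.le (hi r).1.le
    linarith
  exact (tendsto_atTop_mono (fun r => (hi r).2.le) tendsto_id).frequently hsmall.frequently

theorem stmt7_general (D : ℕ → ℕ)
    (hDmono : ∀ m n, 1 ≤ m → m ≤ n → D m ≤ D n)
    (L : Set (Set ℕ))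
    (Linf : Set ℕ) (Lj : ℕ → Set ℕ) (hchain : MeasureZeroChain Linf Lj)
    (hLj : ∀ j, 1 ≤ j → Lj j ∈ L)
    (A : RandGen)
    (hhalluc : ∀ ε : ℝ, 0 < ε → ∃ T, ∀ t, T ≤ t →
      ∀ K ∈ L, ∀ E : ℕ → ℕ, IsEnumOf E K →
        hallucRate A E K t ≤ ε * (Dinv D t : ℝ) / t) :
    ∃ X : ℕ → ℕ, IsEnumOf X Linf ∧
      ∀ᵐ ω ∂A.P,
        liminf (fun i => muPfx (A.gen ω) X Linf D i) atTop = 0 ∧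
        liminf (fun i => muEl (A.gen ω) X Linf D i) atTop = 0 := by
  obtain ⟨X, hX, hsmall⟩ : ∃ X, IsEnumOf X Linf ∧
      ∀ᵐ ω ∂A.P, ∀ ε > 0, ∃ᶠ i in atTop, muPfx (A.gen ω) X Linf D i ≤ ε := by
    by_cases hD : BddAbove (Set.range D)
    · exact ⟨nthElem Linf, isEnumOf_nthElem hchain.1, .of_forall fun ω ε hε =>
        ((tendsto_muPfx_of_bddAbove _ _ hD).eventually (ge_mem_nhds hε)).frequently⟩
    · refine exists_isEnumOf_ae_frequently_muPfx_le (tendsto_atTop_of_not_bddAbove hDmono hD)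
        hchain A fun j hj ε hε => ?_
      obtain ⟨T, hT⟩ := hhalluc ε hε
      exact eventually_atTop.2 ⟨T, fun t ht => hT t ht _ (hLj j hj)⟩
  refine ⟨X, hX, hsmall.mono fun ω hω => ⟨liminf_eq_zero_of_frequently_le
    (muPfx_nonneg _ _ _ _) hω, liminf_eq_zero_of_frequently_le (muEl_nonneg _ _ _ _) fun ε hε =>
      (hω ε hε).mono fun i hi => (muEl_le_muPfx _ _ i hchain.1 hDmono).trans hi⟩⟩

/-- Any countable collection containing a measure-zero chain witnesses the
hallucination barrier: a generator whose hallucination rate on the collection is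
`o(D⁻¹(t)/t)` admits a total enumeration `X^∞` of `L^∞` on which, almost surely, the
timely prefix-wise (hence also element-wise) lower density vanishes. -/
theorem stmt7 (D : ℕ → ℕ) (hD1 : ∀ i, 1 ≤ i → 1 ≤ D i)
    (hDmono : ∀ m n, 1 ≤ m → m ≤ n → D m ≤ D n)
    (L : Set (Set ℕ)) (hL : IsLangCollection L)
    (Linf : Set ℕ) (Lj : ℕ → Set ℕ) (hchain : MeasureZeroChain Linf Lj)
    (hLinf : Linf ∈ L) (hLj : ∀ j, 1 ≤ j → Lj j ∈ L)
    (A : RandGen)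
    (hhalluc : ∀ ε : ℝ, 0 < ε → ∃ T, ∀ t, T ≤ t →
      ∀ K ∈ L, ∀ E : ℕ → ℕ, IsEnumOf E K →
        hallucRate A E K t ≤ ε * (Dinv D t : ℝ) / t) :
    ∃ X : ℕ → ℕ, IsEnumOf X Linf ∧
      ∀ᵐ ω ∂A.P,
        liminf (fun i => muPfx (A.gen ω) X Linf D i) atTop = 0 ∧
        liminf (fun i => muEl (A.gen ω) X Linf D i) atTop = 0 :=
  stmt7_general D hDmono L Linf Lj hchain hLj A hhalluc

end
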